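/- arXiv:0903.4294 — 6 statements merged into one kernel-verified Lean document; each statement's English description precedes it below -/
import Mathlib

section
/- Let G be a Lie group and Ψ_g(α_f) := R^{T*}_g(α_f) + C_g(f) a modification of the cotangent lift of right translation by a map C: G × G → T*G with C_g(f) ∈ T*_{fg}G. Then Ψ is a right action of G on T*G if and only if C satisfies C_{gh}(f) = C_h(fg) + R^{T*}_h(C_g(f)) for all f,g,h ∈ G, and this holds if and only if there exists a one-form α on G with C_g(f) = α(fg) − R^{T*}_g(α(f)). -/
/-- Working in the right trivialization `T*G ≅ G × E` (in which the cotangent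
lift of right translation reads `R^{T*}_g (f, μ) = (f·g, μ)`), the modified
map `Ψ_g (f,μ) := (f·g, μ + C_g(f))` is a right action of `G` on `T*G` iff the
affine term satisfies `C_{gh}(f) = C_h(fg) + R^{T*}_h (C_g(f))`, and this holds
iff there is a one-form `α : G → E` with `C_g(f) = α(fg) − R^{T*}_g(α(f))`. -/
theorem stmt4 {G : Type*} [Group G] {E : Type*} [AddCommGroup E]
    (C : G → G → E) :
    (((∀ p : G × E, (p.1 * 1, p.2 + C 1 p.1) = p) ∧
        ∀ (g h : G) (p : G × E),
          (p.1 * (g * h), p.2 + C (g * h) p.1)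
            = (p.1 * g * h, p.2 + C g p.1 + C h (p.1 * g)))
      ↔ (∀ f g h : G, C (g * h) f = C h (f * g) + C g f)) ∧
    ((∀ f g h : G, C (g * h) f = C h (f * g) + C g f)
      ↔ ∃ α : G → E, ∀ f g : G, C g f = α (f * g) - α f) := by
  constructor
  · constructor
    · rintro ⟨_, h2⟩ f g h
      have := h2 g h (f, 0)
      simp only [Prod.mk.injEq, zero_add] at this
      rw [this.2]; abel
    · intro hc
      constructor
      · intro p
        have h1 : C 1 p.1 = 0 := by
          have := hc p.1 1 1
          simpa using this
        simp [h1]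
      · intro g h p
        have := hc p.1 g h
        simp only [Prod.mk.injEq, mul_assoc, this]
        constructor
        · trivial
        · abel
  · constructor
    · intro hc
      refine ⟨fun f => C f 1, fun f g => ?_⟩
      have := hc 1 f g
      simp only [one_mul] at this
      show C g f = C (f * g) 1 - C f 1
      rw [this]; abel
    · rintro ⟨α, hα⟩ f g h
      rw [hα, hα, hα, ← mul_assoc]
      abel
end

section
/- Let S = G ⋉ V be a semidirect product and c: G → V* a one-cocycle. Define C_{(g,v)}(f,u) := (0_{fg}, v + ρ_g(u), c(g)) ∈ T*_{(f,u)(g,v)}S. Then C satisfies the action-compatibility identity C_{(g,v)(h,w)}(f,u) = C_{(h,w)}((f,u)(g,v)) + R^{T*}_{(h,w)}(C_{(g,v)}(f,u)), so that Ψ_{(g,v)} := R^{T*}_{(g,v)} + C_{(g,v)} is a right action of S on T*S. -/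
/-- Let `S = G ⋉ V` (multiplication `(g₁,v₁)(g₂,v₂) = (g₁g₂, v₂ + ρ_{g₂} v₁)`,
with `ρ` a right representation) and let `c : G → V*` be a one-cocycle for the
contragredient right action `σ g := ρ*_{g⁻¹}` (so `c(fg) = σ g (c f) + c g`).
Working in the right trivialization `T*S ≅ (G × V) × (E × W)` of the cotangent
bundle (base point in `G × V`, covector in `E × W` with `E ≅ T*_f G` and
`W = V*`), the affine term `C_{(g,v)}(f,u) := (0_{fg}, v + ρ_g u, c g)`
satisfies the action-compatibility identity
`C_{(g,v)(h,w)}(f,u) = C_{(h,w)}((f,u)(g,v)) + R^{T*}_{(h,w)}(C_{(g,v)}(f,u))`,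
and hence `Ψ_{(g,v)} := R^{T*}_{(g,v)} + C_{(g,v)}` is a right action of `S`
on `T*S`. -/
theorem stmt6 {k : Type*} [Field k] {G : Type*} [Group G]
    {V W E : Type*} [AddCommGroup V] [Module k V] [AddCommGroup W] [Module k W]
    [AddCommGroup E] [Module k E]
    (ρ : G → V ≃ₗ[k] V) (hρ1 : ρ 1 = LinearEquiv.refl k V)
    (hρmul : ∀ (g h : G) (v : V), ρ (g * h) v = ρ h (ρ g v))
    (σ : G → W ≃ₗ[k] W) (hσ1 : σ 1 = LinearEquiv.refl k W)
    (hσmul : ∀ (g h : G) (w : W), σ (g * h) w = σ h (σ g w))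
    (c : G → W) (hc : ∀ f g : G, c (f * g) = σ g (c f) + c g) :
    let mulS : G × V → G × V → G × V := fun s t => (s.1 * t.1, t.2 + ρ t.1 s.2)
    let Cfun : G × V → G × V → (G × V) × (E × W) :=
      fun s p => (mulS p s, (0, c s.1))
    let RT : G × V → (G × V) × (E × W) → (G × V) × (E × W) :=
      fun s x => (mulS x.1 s, (x.2.1, σ s.1 x.2.2))
    let Ψ : G × V → (G × V) × (E × W) → (G × V) × (E × W) :=
      fun s x => (mulS x.1 s, (x.2.1, σ s.1 x.2.2 + c s.1))
    (∀ s t p : G × V,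
        Cfun (mulS s t) p
          = ((RT t (Cfun s p)).1, (Cfun t (mulS p s)).2 + (RT t (Cfun s p)).2)) ∧
    (∀ x : (G × V) × (E × W), Ψ (1, 0) x = x) ∧
    (∀ (s t : G × V) (x : (G × V) × (E × W)), Ψ (mulS s t) x = Ψ t (Ψ s x)) := by
  intro mulS Cfun RT Ψ
  refine ⟨fun s t p => ?_, fun x => ?_, fun s t x => ?_⟩
  · simp only [Cfun, RT, mulS, hc, hρmul, mul_assoc, Prod.mk.injEq, Prod.mk_add_mk, add_zero,
      map_add]
    exact ⟨⟨True.intro, by rw [add_assoc]⟩, True.intro, by rw [add_comm]⟩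
  · have h1 : c 1 = 0 := by have := hc 1 1; simpa [hσ1] using this
    simp [Ψ, mulS, hρ1, hσ1, h1]
  · simp only [Ψ, mulS, hc, hρmul, hσmul, mul_assoc, Prod.mk.injEq, map_add]
    refine ⟨⟨?_, ?_⟩, ?_, ?_⟩ <;> first | trivial | abel
end

section
/- The one-form α on S = G ⋉ V defined by α(g,v)(ξ_g,(v,u)) = ⟨c(g), u⟩ has exterior derivative dα that is invariant under right translations by S, and its value at the identity is dα(e,0)((ξ,u),(η,w)) = ⟨dc(ξ), w⟩ − ⟨dc(η), u⟩, where dc := T_e c: g → V*. -/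
/-! The form `α` only sees the `G`-coordinate of the base point, so `dα` is built from the
derivatives in `G` of the functions `f ↦ ⟨c f, u⟩`. The cocycle identity gives
`⟨c (f + g), ρ_g u⟩ = ⟨c f, u⟩ + const`, so right translation by `(g, v)` does not change these
derivatives, and at the identity they are `⟨dc ξ, u⟩`. -/

section Calculus

variable {E E' F : Type*} [NormedAddCommGroup E] [NormedSpace ℝ E]
  [NormedAddCommGroup E'] [NormedSpace ℝ E'] [NormedAddCommGroup F] [NormedSpace ℝ F]

theorem fderiv_comp_fst_apply {φ : E → F} {p : E × E'} (hφ : DifferentiableAt ℝ φ p.1)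
    (X : E × E') : fderiv ℝ (fun y : E × E' => φ y.1) p X = fderiv ℝ φ p.1 X.1 :=
  DFunLike.congr_fun (hφ.hasFDerivAt.comp p hasFDerivAt_fst).fderiv X

theorem fderiv_eq_of_comp_add_right_eq_add_const {φ ψ : E → F} {g : E} {k : F}
    (h : ∀ f, φ (f + g) = ψ f + k) (x : E) : fderiv ℝ φ (x + g) = fderiv ℝ ψ x := by
  rw [← fderiv_comp_add_right, funext h, fderiv_add_const]

theorem fderiv_clm_apply_const {c : E → E' →L[ℝ] F} {x : E} (hc : DifferentiableAt ℝ c x)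
    (u : E') (ξ : E) : fderiv ℝ (fun f => c f u) x ξ = fderiv ℝ c x ξ u := by
  rw [fderiv_clm_apply hc (differentiableAt_const u)]
  simp

end Calculus

section Cocycle

variable {G V : Type*} [AddGroup G] [NormedAddCommGroup V] [NormedSpace ℝ V]
  {ρ : G → V →L[ℝ] V}

theorem rho_neg_apply_rho (hρ0 : ρ 0 = ContinuousLinearMap.id ℝ V)
    (hρadd : ∀ g h : G, ρ (g + h) = (ρ h).comp (ρ g)) (g : G) (u : V) :
    ρ (-g) (ρ g u) = u := by
  have h := congrArg (fun L : V →L[ℝ] V => L u) (hρadd g (-g))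
  simpa [hρ0] using h.symm

theorem cocycle_apply_add_rho (hρ0 : ρ 0 = ContinuousLinearMap.id ℝ V)
    (hρadd : ∀ g h : G, ρ (g + h) = (ρ h).comp (ρ g)) {c : G → V →L[ℝ] ℝ}
    (hc : ∀ f g : G, c (f + g) = (c f).comp (ρ (-g)) + c g) (f g : G) (u : V) :
    c (f + g) (ρ g u) = c f u + c g (ρ g u) := by
  simp [hc f g, rho_neg_apply_rho hρ0 hρadd]

end Cocycle

theorem fderiv_cocycle_apply_translate {G V : Type*} [NormedAddCommGroup G] [NormedSpace ℝ G]
    [NormedAddCommGroup V] [NormedSpace ℝ V] {ρ : G → V →L[ℝ] V}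
    (hρ0 : ρ 0 = ContinuousLinearMap.id ℝ V)
    (hρadd : ∀ g h : G, ρ (g + h) = (ρ h).comp (ρ g)) {c : G → V →L[ℝ] ℝ}
    (hc : ∀ f g : G, c (f + g) = (c f).comp (ρ (-g)) + c g) (x g : G) (u : V) :
    fderiv ℝ (fun f => c f (ρ g u)) (x + g) = fderiv ℝ (fun f => c f u) x :=
  fderiv_eq_of_comp_add_right_eq_add_const (cocycle_apply_add_rho hρ0 hρadd hc · g u) x

/-- On the semidirect product `S = G ⋉ V` (here with `G` an additive Lie group
modeled on a normed space, `ρ` a right representation of `G` on `V`, and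
`c : G → V*` a one-cocycle for the contragredient action,
`c (f+g) = (c f) ∘ ρ_{−g} + c g`), consider the one-form `α` on `S = G × V`
defined by `α(g,v)(ξ_g,(v,u)) = ⟨c g, u⟩`.  Its exterior derivative `dα`
(computed on constant vector fields by
`dα x (X,Y) = D_x(α(·)Y)·X − D_x(α(·)X)·Y`) is invariant under right
translations by `S` (whose tangent map is `(δg, δu) ↦ (δg, ρ_g δu)`), and its
value at the identity is
`dα(e,0)((ξ,u),(η,w)) = ⟨dc ξ, w⟩ − ⟨dc η, u⟩` with `dc := T_e c`. -/
theorem stmt7 {G V : Type*} [NormedAddCommGroup G] [NormedSpace ℝ G]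
    [NormedAddCommGroup V] [NormedSpace ℝ V]
    (ρ : G → V →L[ℝ] V)
    (hρ0 : ρ 0 = ContinuousLinearMap.id ℝ V)
    (hρadd : ∀ g h : G, ρ (g + h) = (ρ h).comp (ρ g))
    (c : G → V →L[ℝ] ℝ)
    (hcdiff : Differentiable ℝ c)
    (hc : ∀ f g : G, c (f + g) = (c f).comp (ρ (-g)) + c g) :
    let α : G × V → G × V → ℝ := fun y δ => c y.1 δ.2
    let dα : G × V → G × V → G × V → ℝ := fun x X Y =>
      fderiv ℝ (fun y => α y Y) x X - fderiv ℝ (fun y => α y X) x Y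
    -- right invariance of dα under translation by (g, v) ∈ S
    (∀ (g : G) (v : V) (x X Y : G × V),
        dα (x.1 + g, v + ρ g x.2) (X.1, ρ g X.2) (Y.1, ρ g Y.2) = dα x X Y) ∧
    -- value at the identity (e,0) of S
    (∀ (ξ η : G) (u w : V),
        dα (0, 0) (ξ, u) (η, w) = fderiv ℝ c 0 ξ w - fderiv ℝ c 0 η u) := by
  intro α dα
  have hcu (u : V) : Differentiable ℝ (fun f => c f u) :=
    hcdiff.clm_apply (differentiable_const u)
  refine ⟨fun g v x X Y => ?_, fun ξ η u w => ?_⟩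
  · simp only [dα, α, fderiv_comp_fst_apply (hcu _ _),
      fderiv_cocycle_apply_translate hρ0 hρadd hc]
  · simp only [dα, α, fderiv_comp_fst_apply (hcu _ _), fderiv_clm_apply_const (hcdiff 0)]
end

section
/- Define the K-cross product on ℝ³ by u ×_K v := det(L) L⁻¹K⁻¹L⁻¹(u × v), where K and L are invertible symmetric 3×3 matrices. Then (u ×_K v)^K = [û^K, v̂^K] (matrix commutator), i.e. the map u ↦ û^K := K⁻¹(Lu)^ is a Lie algebra isomorphism from (ℝ³, ×_K) to (𝔰𝔬(K), [·,·]). -/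
/-!
Write `x̂` for the matrix of `x ⨯₃ ·`. For symmetric `N` one has
`x̂ N ŷ - ŷ N x̂ = (N (x ⨯₃ y))^`, and for symmetric invertible `L` the cofactor identity
`L u ⨯₃ L v = det L · L⁻¹ (u ⨯₃ v)`. With `x = L u`, `y = L v`, `N = K⁻¹` these give
`L (u ×_K v) = K⁻¹ (x ⨯₃ y)`, and the commutator of `K⁻¹ x̂` and `K⁻¹ ŷ` is
`K⁻¹ (x̂ K⁻¹ ŷ - ŷ K⁻¹ x̂)`. Bijectivity onto `𝔰𝔬(K)` holds because `ν ↦ K ν` identifies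
`𝔰𝔬(K)` with the skew-symmetric matrices, which are exactly the matrices `x̂`.
-/

open Matrix

variable {R : Type*} [CommRing R]

def crossMatrix (u : Fin 3 → R) : Matrix (Fin 3) (Fin 3) R :=
  !![0, -u 2, u 1; u 2, 0, -u 0; -u 1, u 0, 0]

theorem crossMatrix_injective : Function.Injective (crossMatrix : (Fin 3 → R) → _) := by
  intro u v h
  ext i
  fin_cases i
  · simpa [crossMatrix] using congr_fun₂ h 2 1
  · simpa [crossMatrix] using congr_fun₂ h 0 2
  · simpa [crossMatrix] using congr_fun₂ h 1 0

theorem exists_crossMatrix_eq_of_transpose_eq_neg [IsAddTorsionFree R]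
    {M : Matrix (Fin 3) (Fin 3) R} (hM : Mᵀ = -M) : ∃ w, crossMatrix w = M := by
  have skew : ∀ i j, M j i = -M i j := fun i j => by
    simpa using congr_fun₂ hM i j
  have diag : ∀ i, M i i = 0 := fun i => self_eq_neg.1 (skew i i)
  refine ⟨![M 2 1, M 0 2, M 1 0], ?_⟩
  ext i j
  fin_cases i <;> fin_cases j <;> simp [crossMatrix, diag, skew 2 1, skew 0 2, skew 1 0]

theorem cross_mulVec_mulVec (M : Matrix (Fin 3) (Fin 3) R) (u v : Fin 3 → R) :
    (M *ᵥ u) ⨯₃ (M *ᵥ v) = (adjugate M)ᵀ *ᵥ (u ⨯₃ v) := by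
  ext i
  fin_cases i <;>
    simp [adjugate_fin_three, cross_apply, mulVec, dotProduct, Fin.sum_univ_three] <;> ring

theorem det_smul_inv_mulVec_cross {L : Matrix (Fin 3) (Fin 3) R} (hL : Lᵀ = L)
    (hLdet : IsUnit L.det) (u v : Fin 3 → R) :
    L.det • L⁻¹ *ᵥ (u ⨯₃ v) = (L *ᵥ u) ⨯₃ (L *ᵥ v) := by
  rw [cross_mulVec_mulVec, adjugate_transpose, hL, inv_def, smul_mulVec, smul_smul,
    Ring.mul_inverse_cancel _ hLdet, one_smul]

theorem crossMatrix_mul_mul_crossMatrix_sub {N : Matrix (Fin 3) (Fin 3) R} (hN : Nᵀ = N)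
    (x y : Fin 3 → R) :
    crossMatrix x * N * crossMatrix y - crossMatrix y * N * crossMatrix x =
      crossMatrix (N *ᵥ (x ⨯₃ y)) := by
  have symm : ∀ i j, N j i = N i j := fun i j => by
    simpa using congr_fun₂ hN i j
  ext i j
  simp only [Matrix.sub_apply, mul_apply, Fin.sum_univ_three]
  fin_cases i <;> fin_cases j <;>
    simp [crossMatrix, cross_apply, mulVec, dotProduct, Fin.sum_univ_three,
      symm 1 0, symm 2 0, symm 2 1] <;> ring

/-- With `u ×_K v := det L · L⁻¹ K⁻¹ L⁻¹ (u × v)` (for invertible symmetric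
`K, L`), the hat map `u ↦ û^K := K⁻¹ (L u)^` intertwines `×_K` with the
matrix commutator: `(u ×_K v)^K = [û^K, v̂^K]`, i.e. it is a Lie algebra
isomorphism `(ℝ³, ×_K) → (𝔰𝔬(K), [·,·])`. -/
theorem stmt14 (K L : Matrix (Fin 3) (Fin 3) ℝ)
    (hK : Kᵀ = K) (hL : Lᵀ = L) (hKdet : IsUnit K.det) (hLdet : IsUnit L.det) :
    let hat : (Fin 3 → ℝ) → Matrix (Fin 3) (Fin 3) ℝ :=
      fun u => !![0, -u 2, u 1; u 2, 0, -u 0; -u 1, u 0, 0]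
    let hatK : (Fin 3 → ℝ) → Matrix (Fin 3) (Fin 3) ℝ :=
      fun u => K⁻¹ * hat (L.mulVec u)
    let crossK : (Fin 3 → ℝ) → (Fin 3 → ℝ) → Fin 3 → ℝ :=
      fun u v => L.det • (L⁻¹ * K⁻¹ * L⁻¹).mulVec (crossProduct u v)
    (∀ u v : Fin 3 → ℝ, hatK (crossK u v) = hatK u * hatK v - hatK v * hatK u) ∧
    Function.Injective hatK ∧
    (∀ ν : Matrix (Fin 3) (Fin 3) ℝ, νᵀ * K + K * ν = 0 → ∃ u, hatK u = ν) := by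
  intro hat hatK crossK
  refine ⟨fun u v => ?_, fun u v huv => ?_, fun ν hν => ?_⟩
  · show K⁻¹ * crossMatrix (L *ᵥ (L.det • (L⁻¹ * K⁻¹ * L⁻¹) *ᵥ (u ⨯₃ v))) =
      K⁻¹ * crossMatrix (L *ᵥ u) * (K⁻¹ * crossMatrix (L *ᵥ v)) -
        K⁻¹ * crossMatrix (L *ᵥ v) * (K⁻¹ * crossMatrix (L *ᵥ u))
    have hK' : K⁻¹ᵀ = K⁻¹ := by rw [transpose_nonsing_inv, hK]
    rw [mulVec_smul, mulVec_mulVec, Matrix.mul_assoc L⁻¹,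
      mul_nonsing_inv_cancel_left _ _ hLdet, ← mulVec_mulVec, ← mulVec_smul,
      det_smul_inv_mulVec_cross hL hLdet, ← crossMatrix_mul_mul_crossMatrix_sub hK']
    simp only [Matrix.mul_sub, Matrix.mul_assoc]
  · have hKinv : IsUnit K⁻¹ := isUnit_nonsing_inv_iff.2 ((isUnit_iff_isUnit_det K).2 hKdet)
    have hLinj : Function.Injective L.mulVec :=
      mulVec_injective_iff_isUnit.2 ((isUnit_iff_isUnit_det L).2 hLdet)
    exact hLinj (crossMatrix_injective (hKinv.mul_left_cancel huv))
  · have hskew : (K * ν)ᵀ = -(K * ν) := by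
      rw [transpose_mul, hK, ← add_eq_zero_iff_eq_neg, hν]
    obtain ⟨w, hw⟩ := exists_crossMatrix_eq_of_transpose_eq_neg hskew
    refine ⟨L⁻¹ *ᵥ w, ?_⟩
    show K⁻¹ * crossMatrix (L *ᵥ (L⁻¹ *ᵥ w)) = ν
    rw [mulVec_mulVec, mul_nonsing_inv _ hLdet, one_mulVec, hw,
      nonsing_inv_mul_cancel_left _ _ hKdet]
end

section
/- Suppose Ψ: Sym(3) → ℝ is O(3)-invariant, i.e. Ψ(AᵀiA) = Ψ(i) for all A ∈ O(3) and all symmetric i. Then for every symmetric positive matrix i, the matrix i·(∂Ψ/∂i) is symmetric, where ∂Ψ/∂i denotes the gradient matrix of Ψ (so that DΨ(i)·h = Tr((∂Ψ/∂i) h) for symmetric h). -/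
/-!
Write `G = ∂Ψ/∂i`. For skew-symmetric `W` the matrices `exp (t W)` are orthogonal, so
differentiating `Ψ (exp (t W)ᵀ i exp (t W)) = Ψ i` at `t = 0` gives `Tr (G (Wᵀ i + i W)) = 0`.
For symmetric `i` and `G` the commutator `W = i G - G i` is skew-symmetric, and for it this trace
is `Tr (Wᵀ W)`; hence `W = 0`, and `(i G)ᵀ = G i = i G`.
-/

open Matrix

section

variable {n : Type*} [Fintype n]

theorem Matrix.commute_of_forall_trace_mul_transpose_mul_add_mul_eq_zero {i G : Matrix n n ℝ}
    (hi : iᵀ = i) (hG : Gᵀ = G)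
    (h : ∀ W : Matrix n n ℝ, Wᵀ = -W → (G * (Wᵀ * i + i * W)).trace = 0) :
    Commute i G := by
  set W := i * G - G * i with hWdef
  have hW : Wᵀ = -W := by rw [transpose_sub, transpose_mul, transpose_mul, hi, hG, neg_sub]
  have hWW : (Wᵀ * W).trace = 0 := calc
    (Wᵀ * W).trace = (i * G * Wᵀ + G * i * W).trace := by
      congr 1
      rw [hW, hWdef]
      noncomm_ring
    _ = (G * (Wᵀ * i + i * W)).trace := by
      rw [Matrix.mul_add, trace_add, trace_add, ← Matrix.mul_assoc G, trace_mul_cycle G Wᵀ i,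
        ← Matrix.mul_assoc G]
    _ = 0 := h W hW
  rw [← conjTranspose_eq_transpose_of_trivial, trace_conjTranspose_mul_self_eq_zero_iff] at hWW
  exact sub_eq_zero.mp hWW

variable [DecidableEq n]

theorem Matrix.transpose_exp_smul (W : Matrix n n ℝ) (t : ℝ) :
    (NormedSpace.exp (t • W))ᵀ = NormedSpace.exp (t • Wᵀ) := by
  rw [← Matrix.exp_transpose, transpose_smul]

theorem Matrix.transpose_exp_smul_mul_self {W : Matrix n n ℝ} (hW : Wᵀ = -W) (t : ℝ) :
    (NormedSpace.exp (t • W))ᵀ * NormedSpace.exp (t • W) = 1 := by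
  rw [transpose_exp_smul, hW, smul_neg,
    ← Matrix.exp_add_of_commute (-(t • W)) (t • W) (Commute.neg_left (Commute.refl _)),
    neg_add_cancel, NormedSpace.exp_zero]

-- The operator norm makes the matrices a complete normed algebra, as `exp` and the product
-- rule need; reading off an entry is a continuous linear map for any norm.
open scoped Matrix.Norms.Operator in
theorem Matrix.hasDerivAt_transpose_exp_smul_mul_mul_exp_smul_apply (W i : Matrix n n ℝ)
    (k l : n) :
    HasDerivAt (fun t : ℝ => ((NormedSpace.exp (t • W))ᵀ * i * NormedSpace.exp (t • W)) k l)
      ((Wᵀ * i + i * W) k l) 0 := by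
  have : CompleteSpace (Matrix n n ℝ) := FiniteDimensional.complete ℝ _
  have h := ((hasDerivAt_exp_smul_const' (𝕂 := ℝ) Wᵀ 0).mul_const i).mul
    (hasDerivAt_exp_smul_const (𝕂 := ℝ) W 0)
  simp only [zero_smul, NormedSpace.exp_zero, Matrix.mul_one, Matrix.one_mul] at h
  simp_rw [transpose_exp_smul]
  exact (entryLinearMap ℝ ℝ k l).toContinuousLinearMap.hasFDerivAt.comp_hasDerivAt 0 h

theorem trace_mul_transpose_mul_add_mul_eq_zero_of_invariant {Ψ : Matrix n n ℝ → ℝ}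
    {i G : Matrix n n ℝ}
    (hderiv : ∀ (γ : ℝ → Matrix n n ℝ) (γ' : Matrix n n ℝ), γ 0 = i →
      (∀ k l : n, HasDerivAt (fun t => γ t k l) (γ' k l) 0) →
      HasDerivAt (fun t => Ψ (γ t)) (G * γ').trace 0)
    (hinv : ∀ A : Matrix n n ℝ, Aᵀ * A = 1 → Ψ (Aᵀ * i * A) = Ψ i)
    {W : Matrix n n ℝ} (hW : Wᵀ = -W) :
    (G * (Wᵀ * i + i * W)).trace = 0 := by
  have hγ := hderiv _ _ (by simp) (hasDerivAt_transpose_exp_smul_mul_mul_exp_smul_apply W i)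
  refine hγ.unique ?_
  simp_rw [hinv _ (transpose_exp_smul_mul_self hW _)]
  exact hasDerivAt_const 0 _

end

/-- If `Ψ : Sym(3) → ℝ` is `O(3)`-invariant (`Ψ(Aᵀ i A) = Ψ(i)` for all
orthogonal `A`) and differentiable at symmetric points with symmetric gradient
matrix `∂Ψ/∂i` representing its derivative via the trace pairing
(`DΨ(i)·h = Tr((∂Ψ/∂i) h)`, packaged here as a chain rule along arbitrary
differentiable matrix curves), then for every symmetric positive-definite `i`
the matrix `i · (∂Ψ/∂i)` is symmetric. -/
theorem stmt16 (Ψ : Matrix (Fin 3) (Fin 3) ℝ → ℝ)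
    (gradΨ : Matrix (Fin 3) (Fin 3) ℝ → Matrix (Fin 3) (Fin 3) ℝ)
    (hgradsym : ∀ i : Matrix (Fin 3) (Fin 3) ℝ, iᵀ = i → (gradΨ i)ᵀ = gradΨ i)
    (hderiv : ∀ i : Matrix (Fin 3) (Fin 3) ℝ, iᵀ = i →
        ∀ (γ : ℝ → Matrix (Fin 3) (Fin 3) ℝ) (γ' : Matrix (Fin 3) (Fin 3) ℝ),
          γ 0 = i →
          (∀ k l : Fin 3, HasDerivAt (fun t => γ t k l) (γ' k l) 0) →
          HasDerivAt (fun t => Ψ (γ t)) (gradΨ i * γ').trace 0)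
    (hinv : ∀ A i : Matrix (Fin 3) (Fin 3) ℝ, Aᵀ * A = 1 → iᵀ = i →
        Ψ (Aᵀ * i * A) = Ψ i) :
    ∀ i : Matrix (Fin 3) (Fin 3) ℝ, i.PosDef → iᵀ = i →
      (i * gradΨ i)ᵀ = i * gradΨ i := by
  intro i _ hi
  have hG := hgradsym i hi
  have hcomm : Commute i (gradΨ i) :=
    commute_of_forall_trace_mul_transpose_mul_add_mul_eq_zero hi hG fun _ hW =>
      trace_mul_transpose_mul_add_mul_eq_zero_of_invariant (hderiv i hi)
        (fun A hA => hinv A i hA hi) hW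
  rw [transpose_mul, hG, hi, hcomm.eq]
end

section
/- Let n: D → ℝ³ be smooth with ‖n‖ = 1, and let ν, n satisfy along a flow the equations (D/dt)n = ν × n and ρJ(D/dt)ν = h × n for a vector field h, with the pointwise constraint n · ν = 0. Then ν = n × (D/dt)n, and n satisfies ρJ (D²/dt²) n − 2q n + h = 0 pointwise, where 2q := n·h − ρJ‖(D/dt)n‖². -/
/-!
Both claims are instances of the BAC–CAB rule `a × (b × c) = (a·c) b − (a·b) c` under
`n·n = 1`, `n·ν = 0`. The first is `n × (ν × n) = ν`. For the second, the product rule gives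
`D²n/Dt² = ν' × n + ν × (ν × n)`; multiplying by `ρJ` and using `ρJ ν' = h × n` turns the first
term into `(h × n) × n = (n·h) n − h` and the second into `−ρJ ‖ν‖² n`, where
`‖ν‖² = ‖ν × n‖² = ‖Dn/Dt‖²` by Lagrange's identity.
-/

open Matrix

theorem HasDerivAt.crossProduct {𝕜 : Type*} [NontriviallyNormedField 𝕜] [CompleteSpace 𝕜]
    {u v : 𝕜 → Fin 3 → 𝕜} {u' v' : Fin 3 → 𝕜} {x : 𝕜}
    (hu : HasDerivAt u u' x) (hv : HasDerivAt v v' x) :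
    HasDerivAt (fun t => u t ⨯₃ v t) (u x ⨯₃ v' + u' ⨯₃ v x) x :=
  (_root_.crossProduct (R := 𝕜)).toContinuousBilinearMap.hasDerivAt_of_bilinear
    (fun _ => hu) (fun _ => hv)

section OrthogonalUnit

variable {R : Type*} [CommRing R] {n v : Fin 3 → R}

theorem cross_cross_eq_self_of_orthogonal_unit (hn : n ⬝ᵥ n = 1) (hv : n ⬝ᵥ v = 0) :
    n ⨯₃ (v ⨯₃ n) = v := by
  rw [cross_cross_eq_smul_sub_smul', hn, dotProduct_comm, hv, one_smul, zero_smul, sub_zero]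

theorem cross_dot_cross_eq_dot_self_of_orthogonal_unit (hn : n ⬝ᵥ n = 1) (hv : n ⬝ᵥ v = 0) :
    v ⨯₃ n ⬝ᵥ v ⨯₃ n = v ⬝ᵥ v := by
  rw [cross_dot_cross, hn, dotProduct_comm v n, hv]
  ring

theorem cross_cross_eq_neg_smul_of_orthogonal (hv : n ⬝ᵥ v = 0) :
    v ⨯₃ (v ⨯₃ n) = -(v ⬝ᵥ v) • n := by
  rw [cross_cross_eq_smul_sub_smul', dotProduct_comm, hv, zero_smul, zero_sub, neg_smul]

theorem cross_cross_eq_smul_sub_of_unit (hn : n ⬝ᵥ n = 1) (h : Fin 3 → R) :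
    h ⨯₃ n ⨯₃ n = (n ⬝ᵥ h) • n - h := by
  rw [cross_cross_eq_smul_sub_smul, hn, one_smul, dotProduct_comm]

theorem director_equation {ν ν' h : Fin 3 → R} (c : R) (hn : n ⬝ᵥ n = 1) (hν : n ⬝ᵥ ν = 0)
    (hν' : c • ν' = h ⨯₃ n) :
    c • (ν ⨯₃ (ν ⨯₃ n) + ν' ⨯₃ n) - (n ⬝ᵥ h - c * (ν ⨯₃ n ⬝ᵥ ν ⨯₃ n)) • n + h = 0 := by
  rw [cross_dot_cross_eq_dot_self_of_orthogonal_unit hn hν,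
    cross_cross_eq_neg_smul_of_orthogonal hν, smul_add, ← LinearMap.map_smul₂, hν',
    cross_cross_eq_smul_sub_of_unit hn]
  module

end OrthogonalUnit

theorem stmt18_general (ρ J : ℝ)
    (n ν h ν' n'' : ℝ → Fin 3 → ℝ)
    (hunit : ∀ t, n t ⬝ᵥ n t = 1)
    (horth : ∀ t, n t ⬝ᵥ ν t = 0)
    (hn : ∀ t, HasDerivAt n (crossProduct (ν t) (n t)) t)
    (hν : ∀ t, HasDerivAt ν (ν' t) t)
    (hνeq : ∀ t, (ρ * J) • ν' t = crossProduct (h t) (n t))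
    (hn'' : ∀ t, HasDerivAt (fun s => crossProduct (ν s) (n s)) (n'' t) t) :
    (∀ t, ν t = crossProduct (n t) (crossProduct (ν t) (n t))) ∧
    (∀ t, (ρ * J) • n'' t
        - (n t ⬝ᵥ h t -
            ρ * J * (crossProduct (ν t) (n t) ⬝ᵥ crossProduct (ν t) (n t))) • n t
        + h t = 0) := by
  refine ⟨fun t => (cross_cross_eq_self_of_orthogonal_unit (hunit t) (horth t)).symm,
    fun t => ?_⟩
  rw [(hn'' t).unique ((hν t).crossProduct (hn t))]
  exact director_equation (ρ * J) (hunit t) (horth t) (hνeq t)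

/-- Along a particle path (so that the material derivative `D/dt` becomes the
ordinary time derivative), suppose the unit director `n` and the microgyration
vector `ν` satisfy `Dn/Dt = ν × n`, `ρJ Dν/Dt = h × n` and the constraint
`n · ν = 0`.  Then `ν = n × Dn/Dt`, and `n` satisfies the Ericksen–Leslie
director equation `ρJ D²n/Dt² − 2q n + h = 0` with
`2q := n·h − ρJ ‖Dn/Dt‖²`. -/
theorem stmt18 (ρ J : ℝ) (hρ : 0 < ρ) (hJ : 0 < J)
    (n ν h ν' n'' : ℝ → Fin 3 → ℝ)
    (hunit : ∀ t, n t ⬝ᵥ n t = 1)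
    (horth : ∀ t, n t ⬝ᵥ ν t = 0)
    (hn : ∀ t, HasDerivAt n (crossProduct (ν t) (n t)) t)
    (hν : ∀ t, HasDerivAt ν (ν' t) t)
    (hνeq : ∀ t, (ρ * J) • ν' t = crossProduct (h t) (n t))
    (hn'' : ∀ t, HasDerivAt (fun s => crossProduct (ν s) (n s)) (n'' t) t) :
    (∀ t, ν t = crossProduct (n t) (crossProduct (ν t) (n t))) ∧
    (∀ t, (ρ * J) • n'' t
        - (n t ⬝ᵥ h t -
            ρ * J * (crossProduct (ν t) (n t) ⬝ᵥ crossProduct (ν t) (n t))) • n t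
        + h t = 0) :=
  stmt18_general ρ J n ν h ν' n'' hunit horth hn hν hνeq hn''
end
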